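/- Let A ∈ ℝ≥0^{n×n} with λ(A) = 1, let C be a completely reducible subgraph of the critical graph of A with node set N_c and cyclicity γ, let B = (A^γ)* (Kleene star of the γ-th max-algebraic power), and define C, R, S by: C has columns of B with indices in N_c (others zero), R has rows of B with indices in N_c (others zero), and S agrees with A on edges of C and is zero elsewhere. If T is such that the sequence {S^t} is periodic for t ≥ T, then S^{lγ} ⊗ R = R and C ⊗ S^{lγ} = C for every multiple lγ ≥ T. -/

import Mathlib

/-!
Since `λ(A) = 1`, a closed walk of `A` of length at most `n` has weight at most `1`, and longer
ones split off such cycles; hence all closed walks weigh at most `1`, the powers of `A` are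
bounded, and `B = (A^γ)*` absorbs every power of `A^γ`. As `S ≤ A` and `S^(lγ)` has no entries
between `N_c` and its complement, this gives `S^(lγ) ⊗ R ≤ R` and `C ⊗ S^(lγ) ≤ C`.

Conversely, every edge `x → y` of the subgraph lies on a critical cycle of weight `1`, so
`a_xy ⊗ (A^L)_yx ≥ 1` for some `L`; chaining these return paths along a closed walk of the
subgraph produces a closed walk of `A`, of weight at most `1`, so closed walks of the subgraph
weigh at least `1`. Every node of `N_c` lies on one (complete reducibility), and repeating it
and using the periodicity of `S^t` gives `(S^(lγ))_ii ≥ 1` on `N_c`: the reverse inequalities.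
-/

open scoped NNReal Classical

namespace MaxAlg

/-- Max-times matrix product over `ℝ≥0`. -/
noncomputable def mmul {n : ℕ} (A B : Fin n → Fin n → ℝ≥0) : Fin n → Fin n → ℝ≥0 :=
  fun i j => Finset.univ.sup fun k => A i k * B k j

/-- Max-algebraic powers of a matrix, with `mpow A 0` the identity. -/
noncomputable def mpow {n : ℕ} (A : Fin n → Fin n → ℝ≥0) : ℕ → (Fin n → Fin n → ℝ≥0)
  | 0 => fun i j => if i = j then 1 else 0
  | (k+1) => mmul A (mpow A k)

/-- Weight of a walk `p` of length `k` (product of the edge weights). -/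
noncomputable def pathWeight {n : ℕ} (A : Fin n → Fin n → ℝ≥0) (k : ℕ)
    (p : Fin (k+1) → Fin n) : ℝ≥0 :=
  ∏ t : Fin k, A (p t.castSucc) (p t.succ)

/-- `p` is a walk in the edge relation `E`. -/
def IsEPath {n : ℕ} (E : Fin n → Fin n → Prop) (k : ℕ) (p : Fin (k+1) → Fin n) : Prop :=
  ∀ t : Fin k, E (p t.castSucc) (p t.succ)

/-- `j` is reachable from `i` in `E` (possibly by the empty path). -/
def Reach {n : ℕ} (E : Fin n → Fin n → Prop) (i j : Fin n) : Prop :=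
  ∃ k, ∃ p : Fin (k+1) → Fin n, IsEPath E k p ∧ p 0 = i ∧ p (Fin.last k) = j

/-- Edge relation of the digraph associated with a nonnegative matrix. -/
def edges {n : ℕ} (A : Fin n → Fin n → ℝ≥0) (i j : Fin n) : Prop := A i j ≠ 0

/-- Lengths of (positive-length) closed walks through `i` in `E`. -/
def cycLen {n : ℕ} (E : Fin n → Fin n → Prop) (i : Fin n) : Set ℕ :=
  {k | 0 < k ∧ ∃ p : Fin (k+1) → Fin n, IsEPath E k p ∧ p 0 = i ∧ p (Fin.last k) = i}

/-- Lengths of all closed walks in `E`. -/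
def allCycLen {n : ℕ} (E : Fin n → Fin n → Prop) : Set ℕ :=
  {k | ∃ i, k ∈ cycLen E i}

/-- The gcd of a set of naturals, characterized by the gcd property. -/
noncomputable def setGcd (S : Set ℕ) : ℕ :=
  sInf {d | (∀ s ∈ S, d ∣ s) ∧ ∀ e : ℕ, (∀ s ∈ S, e ∣ s) → e ∣ d}

/-- Cyclicity of a (completely reducible) digraph: lcm over the nodes of the
gcd of the cycle lengths through that node. -/
noncomputable def graphCyc {n : ℕ} (E : Fin n → Fin n → Prop) : ℕ :=
  Finset.univ.lcm fun i => if (cycLen E i).Nonempty then setGcd (cycLen E i) else 1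

/-- The maximum cycle geometric mean `λ(A)`. -/
noncomputable def mcgm {n : ℕ} (A : Fin n → Fin n → ℝ≥0) : ℝ≥0 :=
  sSup {x | ∃ k : ℕ, 0 < k ∧ k ≤ n ∧ ∃ p : Fin (k+1) → Fin n,
    p 0 = p (Fin.last k) ∧ x = pathWeight A k p ^ ((1 : ℝ) / (k : ℝ))}

/-- The Kleene star `A* = I ⊕ A ⊕ A² ⊕ ⋯` (entrywise supremum of all powers). -/
noncomputable def kleeneStar {n : ℕ} (A : Fin n → Fin n → ℝ≥0) : Fin n → Fin n → ℝ≥0 :=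
  fun i j => ⨆ k : ℕ, mpow A k i j

/-- `(i,j)` is a critical edge: it lies on a cycle attaining `λ(A)`. -/
def IsCriticalEdge {n : ℕ} (A : Fin n → Fin n → ℝ≥0) (i j : Fin n) : Prop :=
  ∃ k : ℕ, 0 < k ∧ k ≤ n ∧ ∃ p : Fin (k+1) → Fin n, p 0 = p (Fin.last k) ∧
    pathWeight A k p ^ ((1 : ℝ) / (k : ℝ)) = mcgm A ∧
    ∃ t : Fin k, p t.castSucc = i ∧ p t.succ = j

/-- A node lying on a critical cycle of `A`. -/
def IsCriticalNode {n : ℕ} (A : Fin n → Fin n → ℝ≥0) (i : Fin n) : Prop :=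
  (∃ j, IsCriticalEdge A i j) ∨ (∃ j, IsCriticalEdge A j i)

/-- A completely reducible subgraph of the critical graph of `A`:
every edge is critical, and every edge can be completed to a cycle of the
subgraph (so each weakly connected part is strongly connected). -/
structure CritSubgraph {n : ℕ} (A : Fin n → Fin n → ℝ≥0) where
  E : Fin n → Fin n → Prop
  critical : ∀ i j, E i j → IsCriticalEdge A i j
  reducible : ∀ i j, E i j → ∃ k, ∃ p : Fin (k+1) → Fin n,
    IsEPath E k p ∧ p 0 = j ∧ p (Fin.last k) = i

/-- Node set `N_c` of the subgraph. -/
def CritSubgraph.Nc {n : ℕ} {A : Fin n → Fin n → ℝ≥0} (G : CritSubgraph A) (i : Fin n) : Prop :=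
  (∃ j, G.E i j) ∨ (∃ j, G.E j i)

/-- The matrix `C`: columns of `(A^γ)*` with indices in `N_c`, other columns zero. -/
noncomputable def Cmat {n : ℕ} (A : Fin n → Fin n → ℝ≥0) (G : CritSubgraph A) :
    Fin n → Fin n → ℝ≥0 :=
  fun i j => if G.Nc j then kleeneStar (mpow A (graphCyc G.E)) i j else 0

/-- The matrix `R`: rows of `(A^γ)*` with indices in `N_c`, other rows zero. -/
noncomputable def Rmat {n : ℕ} (A : Fin n → Fin n → ℝ≥0) (G : CritSubgraph A) :
    Fin n → Fin n → ℝ≥0 :=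
  fun i j => if G.Nc i then kleeneStar (mpow A (graphCyc G.E)) i j else 0

/-- The matrix `S`: the restriction of `A` to the edges of the subgraph. -/
noncomputable def Smat {n : ℕ} (A : Fin n → Fin n → ℝ≥0) (G : CritSubgraph A) :
    Fin n → Fin n → ℝ≥0 :=
  fun i j => if G.E i j then A i j else 0

/-- The CSR product `P^(t) = C ⊗ S^t ⊗ R`. -/
noncomputable def csr {n : ℕ} (A : Fin n → Fin n → ℝ≥0) (G : CritSubgraph A) (t : ℕ) :
    Fin n → Fin n → ℝ≥0 :=
  mmul (mmul (Cmat A G) (mpow (Smat A G) t)) (Rmat A G)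

/-- The strongly connected component (as a node set) of `i` in `E`. -/
def scc {n : ℕ} (E : Fin n → Fin n → Prop) (i : Fin n) : Set (Fin n) :=
  {j | Reach E i j ∧ Reach E j i}

/-- The principal submatrix of `A` on the strongly connected component of `i`
in `D(A)` (other entries zero). -/
noncomputable def compMat {n : ℕ} (A : Fin n → Fin n → ℝ≥0) (i : Fin n) :
    Fin n → Fin n → ℝ≥0 :=
  fun a b => if a ∈ scc (edges A) i ∧ b ∈ scc (edges A) i then A a b else 0

/-- `λ(i)`: the m.c.g.m. of the component of `D(A)` containing `i`. -/
noncomputable def lamNode {n : ℕ} (A : Fin n → Fin n → ℝ≥0) (i : Fin n) : ℝ≥0 :=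
  mcgm (compMat A i)

/-- `i` belongs to a nontrivial component of `D(A)` (it lies on a cycle). -/
def Nontrivial' {n : ℕ} (A : Fin n → Fin n → ℝ≥0) (i : Fin n) : Prop :=
  (cycLen (edges A) i).Nonempty

/-- `γ`: the lcm of the cyclicities of the critical graphs of the nontrivial
components of `D(A)`. -/
noncomputable def gammaU {n : ℕ} (A : Fin n → Fin n → ℝ≥0) : ℕ :=
  Finset.univ.lcm fun i =>
    if Nontrivial' A i then graphCyc (IsCriticalEdge (compMat A i)) else 1

/-- Max-times matrix-vector product. -/
noncomputable def mvec {n : ℕ} (M : Fin n → Fin n → ℝ≥0) (y : Fin n → ℝ≥0) :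
    Fin n → ℝ≥0 :=
  fun a => Finset.univ.sup fun k => M a k * y k

/-- `i` strongly accesses `j`: paths of every sufficiently large length exist. -/
def StrongAccess {n : ℕ} (E : Fin n → Fin n → Prop) (i j : Fin n) : Prop :=
  ∃ T, ∀ t ≥ T, ∃ p : Fin (t+1) → Fin n, IsEPath E t p ∧ p 0 = i ∧ p (Fin.last t) = j

section MatrixAlgebra

variable {n : ℕ}

lemma mul_le_mmul (A B : Fin n → Fin n → ℝ≥0) (i k j : Fin n) : A i k * B k j ≤ mmul A B i j :=
  Finset.le_sup (f := fun k => A i k * B k j) (Finset.mem_univ k)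

lemma mmul_le_iff {A B : Fin n → Fin n → ℝ≥0} {i j : Fin n} {c : ℝ≥0} :
    mmul A B i j ≤ c ↔ ∀ k, A i k * B k j ≤ c := by
  simp [mmul]

lemma mmul_assoc (A B C : Fin n → Fin n → ℝ≥0) : mmul (mmul A B) C = mmul A (mmul B C) := by
  funext i j
  simp only [mmul, NNReal.finset_sup_mul, NNReal.mul_finset_sup, mul_assoc]
  exact Finset.sup_comm _ _ _

lemma sup_ite_eq (f : Fin n → ℝ≥0) (i : Fin n) :
    (Finset.univ.sup fun k => if i = k then f k else 0) = f i := by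
  refine le_antisymm (Finset.sup_le fun k _ => ?_) ?_
  · split_ifs with h
    · rw [h]
    · exact zero_le
  · simpa using Finset.le_sup (f := fun k => if i = k then f k else 0) (Finset.mem_univ i)

lemma mpow_zero_mmul (A B : Fin n → Fin n → ℝ≥0) : mmul (mpow A 0) B = B := by
  funext i j
  simpa [mmul, mpow] using sup_ite_eq (B · j) i

lemma mmul_mpow_zero (A B : Fin n → Fin n → ℝ≥0) : mmul A (mpow B 0) = A := by
  funext i j
  simpa [mmul, mpow, eq_comm] using sup_ite_eq (A i) j

lemma mpow_one (A : Fin n → Fin n → ℝ≥0) : mpow A 1 = A :=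
  mmul_mpow_zero A A

lemma mpow_add (A : Fin n → Fin n → ℝ≥0) (a b : ℕ) :
    mpow A (a + b) = mmul (mpow A a) (mpow A b) := by
  induction a with
  | zero => rw [Nat.zero_add, mpow_zero_mmul]
  | succ a ih => rw [Nat.add_right_comm, mpow, ih, ← mmul_assoc]; rfl

lemma mpow_succ' (A : Fin n → Fin n → ℝ≥0) (k : ℕ) : mpow A (k + 1) = mmul (mpow A k) A := by
  rw [mpow_add, mpow_one]

lemma mpow_mul (A : Fin n → Fin n → ℝ≥0) (a b : ℕ) : mpow A (a * b) = mpow (mpow A a) b := by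
  induction b with
  | zero => rfl
  | succ b ih => rw [Nat.mul_succ, Nat.add_comm, mpow_add, ih]; rfl

lemma mul_le_mpow_add (A : Fin n → Fin n → ℝ≥0) (a b : ℕ) (i k j : Fin n) :
    mpow A a i k * mpow A b k j ≤ mpow A (a + b) i j := by
  rw [mpow_add]
  exact mul_le_mmul _ _ i k j

lemma mpow_mono {A A' : Fin n → Fin n → ℝ≥0} (h : ∀ i j, A i j ≤ A' i j) (k : ℕ) (i j : Fin n) :
    mpow A k i j ≤ mpow A' k i j := by
  induction k generalizing i j with
  | zero => exact le_rfl
  | succ k ih =>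
    exact mmul_le_iff.2 fun m => (mul_le_mul' (h i m) (ih m j)).trans (mul_le_mmul _ _ i m j)

end MatrixAlgebra

section Walks

variable {n : ℕ}

/-- Walks are indexed by `ℕ` rather than by `Fin (k + 1)` as in `pathWeight`, so that they can be
cut and shifted without reindexing. -/
noncomputable def walkWeight (A : Fin n → Fin n → ℝ≥0) (k : ℕ) (w : ℕ → Fin n) : ℝ≥0 :=
  ∏ t ∈ Finset.range k, A (w t) (w (t + 1))

lemma walkWeight_add (A : Fin n → Fin n → ℝ≥0) (a b : ℕ) (w : ℕ → Fin n) :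
    walkWeight A (a + b) w = walkWeight A a w * walkWeight A b (fun t => w (a + t)) :=
  Finset.prod_range_add _ a b

lemma walkWeight_succ (A : Fin n → Fin n → ℝ≥0) (k : ℕ) (w : ℕ → Fin n) :
    walkWeight A (k + 1) w = walkWeight A k w * A (w k) (w (k + 1)) :=
  Finset.prod_range_succ _ k

lemma walkWeight_le_mpow (A : Fin n → Fin n → ℝ≥0) (k : ℕ) (w : ℕ → Fin n) :
    walkWeight A k w ≤ mpow A k (w 0) (w k) := by
  induction k with
  | zero => simp [walkWeight, mpow]
  | succ k ih =>
    rw [walkWeight_succ, mpow_succ']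
    exact (mul_le_mul_left ih _).trans (mul_le_mmul _ _ _ (w k) _)

lemma walkWeight_shift_le_mpow (A : Fin n → Fin n → ℝ≥0) (a d : ℕ) (w : ℕ → Fin n) :
    walkWeight A d (fun t => w (a + t)) ≤ mpow A d (w a) (w (a + d)) := by
  simpa using walkWeight_le_mpow A d fun t => w (a + t)

lemma exists_walkWeight_eq_mpow (A : Fin n → Fin n → ℝ≥0) (k : ℕ) (i j : Fin n) :
    ∃ w : ℕ → Fin n, w 0 = i ∧ w (k + 1) = j ∧ walkWeight A (k + 1) w = mpow A (k + 1) i j := by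
  induction k generalizing i with
  | zero => exact ⟨fun t => if t = 0 then i else j, rfl, rfl, by simp [walkWeight, mpow_one]⟩
  | succ k ih =>
    obtain ⟨m, -, hm⟩ := Finset.exists_mem_eq_sup Finset.univ ⟨i, Finset.mem_univ i⟩
      fun m => A i m * mpow A (k + 1) m j
    obtain ⟨w, hw0, hwk, hw⟩ := ih m
    refine ⟨fun t => if t = 0 then i else w (t - 1), rfl, by simpa using hwk, ?_⟩
    rw [walkWeight, Finset.prod_range_succ', mpow, mmul, hm, ← hw, walkWeight, mul_comm]
    simp [hw0]

lemma pathWeight_eq_walkWeight (A : Fin n → Fin n → ℝ≥0) (k : ℕ) (w : ℕ → Fin n) :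
    pathWeight A k (fun t => w t) = walkWeight A k w := by
  rw [pathWeight, walkWeight, ← Fin.prod_univ_eq_prod_range]
  rfl

lemma exists_walk_eq_tuple {α : Type*} {k : ℕ} (p : Fin (k + 1) → α) :
    ∃ w : ℕ → α, (fun t : Fin (k + 1) => w t) = p :=
  ⟨fun s => p (Fin.clamp s k), funext fun t => congrArg p (Fin.ext (by simp [Fin.clamp, t.is_le]))⟩

end Walks

section CycleMeans

variable {n : ℕ}

lemma pathWeight_rpow_le_mcgm (A : Fin n → Fin n → ℝ≥0) {k : ℕ} (hk : 0 < k) (hkn : k ≤ n)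
    {p : Fin (k + 1) → Fin n} (hp : p 0 = p (Fin.last k)) :
    pathWeight A k p ^ ((1 : ℝ) / k) ≤ mcgm A := by
  refine le_csSup ?_ ⟨k, hk, hkn, p, hp, rfl⟩
  refine ((Set.finite_range fun q : Σ k : Fin (n + 1), Fin (k + 1) → Fin n =>
    pathWeight A q.1 q.2 ^ ((1 : ℝ) / (q.1 : ℕ))).subset ?_).bddAbove
  rintro x ⟨k, -, hkn, p, -, rfl⟩
  exact ⟨⟨⟨k, Nat.lt_succ_of_le hkn⟩, p⟩, rfl⟩

lemma walkWeight_le_one_of_mcgm_le_one {A : Fin n → Fin n → ℝ≥0} (hA : mcgm A ≤ 1) {k : ℕ}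
    (hk : 0 < k) (hkn : k ≤ n) {w : ℕ → Fin n} (hw : w 0 = w k) : walkWeight A k w ≤ 1 := by
  have h := (pathWeight_rpow_le_mcgm A hk hkn (p := fun t => w t) (by simpa using hw)).trans hA
  rw [pathWeight_eq_walkWeight, one_div] at h
  rw [← NNReal.rpow_inv_natCast_pow (walkWeight A k w) hk.ne']
  exact pow_le_one₀ zero_le h

/-- Pigeonhole: a walk longer than `n` repeats a node, so it splits into a shorter walk with the
same ends and a closed walk. -/
lemma exists_mpow_le_mul_mpow_diag (A : Fin n → Fin n → ℝ≥0) {k : ℕ} (hk : n < k) (i j : Fin n) :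
    ∃ k' d x, k' < k ∧ d < k ∧ mpow A k i j ≤ mpow A k' i j * mpow A d x x := by
  obtain ⟨k, rfl⟩ : ∃ k', k = k' + 1 := ⟨k - 1, by omega⟩
  obtain ⟨w, rfl, rfl, hw⟩ := exists_walkWeight_eq_mpow A k i j
  obtain ⟨a, b, hab, heq⟩ :=
    Fintype.exists_ne_map_eq_of_card_lt (fun t : Fin (n + 1) => w t) (by simp)
  wlog hlt : a < b generalizing a b
  · exact this b a hab.symm heq.symm (lt_of_le_of_ne (not_lt.1 hlt) hab.symm)
  obtain ⟨d, hb⟩ : ∃ d, (b : ℕ) = a + d := ⟨b - a, by omega⟩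
  obtain ⟨r, hr⟩ : ∃ r, k + 1 = a + d + r := ⟨k + 1 - b, by omega⟩
  refine ⟨a + r, d, w a, by omega, by omega, ?_⟩
  have hcycle : w (a + d) = w a := by rw [← hb]; exact heq.symm
  rw [← hw, hr]
  calc walkWeight A (a + d + r) w
      = walkWeight A a w * walkWeight A d (fun t => w (a + t)) *
          walkWeight A r (fun t => w (a + d + t)) := by
        rw [walkWeight_add, walkWeight_add]
    _ ≤ mpow A a (w 0) (w a) * mpow A d (w a) (w a) * mpow A r (w a) (w (a + d + r)) := by
        gcongr
        · exact walkWeight_le_mpow A a w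
        · simpa [hcycle] using walkWeight_shift_le_mpow A a d w
        · simpa [hcycle] using walkWeight_shift_le_mpow A (a + d) r w
    _ = mpow A a (w 0) (w a) * mpow A r (w a) (w (a + d + r)) * mpow A d (w a) (w a) := by ring
    _ ≤ mpow A (a + r) (w 0) (w (a + d + r)) * mpow A d (w a) (w a) :=
        mul_le_mul_left (mul_le_mpow_add A a r _ _ _) _

lemma mpow_diag_le_one {A : Fin n → Fin n → ℝ≥0} (hA : mcgm A ≤ 1) (k : ℕ) (i : Fin n) :
    mpow A k i i ≤ 1 := by
  induction k using Nat.strong_induction_on generalizing i with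
  | _ k ih =>
  rcases Nat.eq_zero_or_pos k with rfl | hk
  · simp [mpow]
  rcases le_or_gt k n with hkn | hkn
  · obtain ⟨k, rfl⟩ : ∃ k', k = k' + 1 := ⟨k - 1, by omega⟩
    obtain ⟨w, hw0, hwk, hw⟩ := exists_walkWeight_eq_mpow A k i i
    exact hw ▸ walkWeight_le_one_of_mcgm_le_one hA hk hkn (hw0.trans hwk.symm)
  · obtain ⟨k', d, x, hk', hd, hle⟩ := exists_mpow_le_mul_mpow_diag A hkn i i
    exact hle.trans (mul_le_one' (ih k' hk' i) (ih d hd x))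

lemma exists_mpow_le_of_mpow_diag_le_one {A : Fin n → Fin n → ℝ≥0}
    (hA : ∀ k i, mpow A k i i ≤ 1) : ∃ M, ∀ k i j, mpow A k i j ≤ M := by
  obtain ⟨M, hM⟩ := ((Finset.range (n + 1) ×ˢ Finset.univ).image
    fun q : ℕ × Fin n × Fin n => mpow A q.1 q.2.1 q.2.2).bddAbove
  refine ⟨M, fun k => ?_⟩
  induction k using Nat.strong_induction_on with
  | _ k ih =>
  intro i j
  rcases le_or_gt k n with hkn | hkn
  · exact hM <| Finset.mem_coe.2 <| Finset.mem_image.2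
      ⟨(k, i, j), Finset.mem_product.2 ⟨Finset.mem_range.2 (by omega), Finset.mem_univ _⟩, rfl⟩
  · obtain ⟨k', d, x, hk', -, hle⟩ := exists_mpow_le_mul_mpow_diag A hkn i j
    simpa using hle.trans (mul_le_mul' (ih k' hk' i j) (hA d x))

variable {M : Fin n → Fin n → ℝ≥0} {C : ℝ≥0}

lemma mpow_le_kleeneStar (hC : ∀ m i j, mpow M m i j ≤ C) (m : ℕ) (i j : Fin n) :
    mpow M m i j ≤ kleeneStar M i j :=
  le_ciSup (f := fun m => mpow M m i j) ⟨C, by rintro _ ⟨m, rfl⟩; exact hC m i j⟩ m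

lemma mpow_mul_kleeneStar_le (hC : ∀ m i j, mpow M m i j ≤ C) (l : ℕ) (i k j : Fin n) :
    mpow M l i k * kleeneStar M k j ≤ kleeneStar M i j :=
  NNReal.mul_iSup_le fun m => (mul_le_mpow_add M l m i k j).trans (mpow_le_kleeneStar hC _ i j)

lemma kleeneStar_mul_mpow_le (hC : ∀ m i j, mpow M m i j ≤ C) (l : ℕ) (i k j : Fin n) :
    kleeneStar M i k * mpow M l k j ≤ kleeneStar M i j :=
  NNReal.iSup_mul_le fun m => (mul_le_mpow_add M m l i k j).trans (mpow_le_kleeneStar hC _ i j)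

end CycleMeans

section CriticalCycles

variable {n : ℕ}

lemma IsCriticalEdge.exists_one_le_mul_mpow {A : Fin n → Fin n → ℝ≥0} (hA : mcgm A = 1)
    {x y : Fin n} (h : IsCriticalEdge A x y) : ∃ L, 1 ≤ A x y * mpow A L y x := by
  obtain ⟨k, hk, -, p, hp, hmean, ⟨t, ht⟩, hx, hy⟩ := h
  obtain ⟨w, rfl⟩ := exists_walk_eq_tuple p
  simp only [Fin.val_zero, Fin.val_last, Fin.val_castSucc, Fin.val_succ] at hp hx hy
  rw [pathWeight_eq_walkWeight, hA, one_div] at hmean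
  have hw : walkWeight A k w = 1 := by
    rw [← NNReal.rpow_inv_natCast_pow (walkWeight A k w) hk.ne', hmean, one_pow]
  obtain ⟨r, hr⟩ : ∃ r, k = t + 1 + r := ⟨k - (t + 1), by omega⟩
  have hend : w (t + 1 + r) = w 0 := by rw [← hr, hp]
  refine ⟨r + t, ?_⟩
  calc 1 = walkWeight A t w * walkWeight A 1 (fun s => w (t + s)) *
        walkWeight A r (fun s => w (t + 1 + s)) := by
        rw [← hw, hr, walkWeight_add, walkWeight_add]
    _ ≤ mpow A t (w 0) x * A x y * mpow A r y (w 0) := by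
        gcongr
        · simpa [hx] using walkWeight_le_mpow A t w
        · simp [walkWeight, hx, hy]
        · simpa [hy, hend] using walkWeight_shift_le_mpow A (t + 1) r w
    _ = A x y * (mpow A r y (w 0) * mpow A t (w 0) x) := by ring
    _ ≤ A x y * mpow A (r + t) y x := mul_le_mul_right (mul_le_mpow_add A r t y _ x) _

lemma exists_one_le_walkWeight_mul_mpow {S A : Fin n → Fin n → ℝ≥0} {k : ℕ} {w : ℕ → Fin n}
    (hw : ∀ t < k, ∃ L, 1 ≤ S (w t) (w (t + 1)) * mpow A L (w (t + 1)) (w t)) :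
    ∃ L, 1 ≤ walkWeight S k w * mpow A L (w k) (w 0) := by
  induction k with
  | zero => exact ⟨0, by simp [walkWeight, mpow]⟩
  | succ k ih =>
    obtain ⟨L, hL⟩ := ih fun t ht => hw t (by omega)
    obtain ⟨L', hL'⟩ := hw k (by omega)
    refine ⟨L' + L, ?_⟩
    calc 1 ≤ (S (w k) (w (k + 1)) * mpow A L' (w (k + 1)) (w k)) *
          (walkWeight S k w * mpow A L (w k) (w 0)) := one_le_mul hL' hL
      _ = walkWeight S k w * S (w k) (w (k + 1)) *
          (mpow A L' (w (k + 1)) (w k) * mpow A L (w k) (w 0)) := by ring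
      _ ≤ walkWeight S (k + 1) w * mpow A (L' + L) (w (k + 1)) (w 0) := by
        rw [walkWeight_succ]
        exact mul_le_mul_right (mul_le_mpow_add A L' L _ _ _) _

namespace CritSubgraph

variable {A : Fin n → Fin n → ℝ≥0} (G : CritSubgraph A)

lemma Smat_le (i j : Fin n) : Smat A G i j ≤ A i j := by
  unfold Smat
  split_ifs <;> simp

lemma Nc_of_Smat_ne_zero {i j : Fin n} (h : Smat A G i j ≠ 0) : G.Nc i ∧ G.Nc j := by
  unfold Smat at h
  split_ifs at h with hE
  · exact ⟨Or.inl ⟨j, hE⟩, Or.inr ⟨i, hE⟩⟩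
  · exact absurd rfl h

lemma exists_one_le_Smat_mul_mpow (hA : mcgm A = 1) {x y : Fin n} (hxy : G.E x y) :
    ∃ L, 1 ≤ Smat A G x y * mpow A L y x := by
  simpa [Smat, hxy] using (G.critical x y hxy).exists_one_le_mul_mpow hA

/-- The edge `x → y` and the path of `G` back from `y` to `x` each have a return path in `D(A)`
making up weight at least `1`; the two return paths form a closed walk of weight at most `1`. -/
lemma exists_one_le_Smat_mul_mpow_Smat (hA : mcgm A = 1) {x y : Fin n} (hxy : G.E x y) :
    ∃ k, 1 ≤ Smat A G x y * mpow (Smat A G) k y x := by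
  obtain ⟨k, p, hp, hp0, hpk⟩ := G.reducible x y hxy
  obtain ⟨w, rfl⟩ := exists_walk_eq_tuple p
  simp only [Fin.val_zero, Fin.val_last] at hp0 hpk
  obtain ⟨L, hL⟩ := exists_one_le_walkWeight_mul_mpow (S := Smat A G) (A := A)
    fun t ht => G.exists_one_le_Smat_mul_mpow hA (hp ⟨t, ht⟩)
  obtain ⟨L', hL'⟩ := G.exists_one_le_Smat_mul_mpow hA hxy
  rw [hp0, hpk] at hL
  have hcycle : mpow A L x y * mpow A L' y x ≤ 1 :=
    (mul_le_mpow_add A L L' x y x).trans (mpow_diag_le_one hA.le _ x)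
  refine ⟨k, ?_⟩
  calc 1 ≤ (walkWeight (Smat A G) k w * mpow A L x y) * (Smat A G x y * mpow A L' y x) :=
        one_le_mul hL hL'
    _ = Smat A G x y * walkWeight (Smat A G) k w * (mpow A L x y * mpow A L' y x) := by ring
    _ ≤ Smat A G x y * mpow (Smat A G) k y x * 1 := by
        gcongr
        simpa [hp0, hpk] using walkWeight_le_mpow (Smat A G) k w
    _ = Smat A G x y * mpow (Smat A G) k y x := mul_one _

lemma exists_one_le_mpow_Smat_diag (hA : mcgm A = 1) {i : Fin n} (hi : G.Nc i) :
    ∃ c, 0 < c ∧ 1 ≤ mpow (Smat A G) c i i := by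
  rcases hi with ⟨j, hij⟩ | ⟨j, hji⟩
  · obtain ⟨k, hk⟩ := G.exists_one_le_Smat_mul_mpow_Smat hA hij
    refine ⟨1 + k, by omega, hk.trans ?_⟩
    simpa [mpow_one] using mul_le_mpow_add (Smat A G) 1 k i j i
  · obtain ⟨k, hk⟩ := G.exists_one_le_Smat_mul_mpow_Smat hA hji
    refine ⟨k + 1, by omega, hk.trans ?_⟩
    rw [mul_comm]
    simpa [mpow_one] using mul_le_mpow_add (Smat A G) k 1 i j i

end CritSubgraph

end CriticalCycles

section Periodicity

variable {n : ℕ}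

lemma mpow_diag_pow_le (S : Fin n → Fin n → ℝ≥0) (c m : ℕ) (i : Fin n) :
    mpow S c i i ^ m ≤ mpow S (c * m) i i := by
  induction m with
  | zero => simp [mpow]
  | succ m ih =>
    rw [pow_succ, Nat.mul_succ]
    exact (mul_le_mul_left ih _).trans (mul_le_mpow_add S _ _ i i i)

lemma mpow_add_mul_of_periodic {S : Fin n → Fin n → ℝ≥0} {γ T : ℕ}
    (hT : ∀ t ≥ T, mpow S (t + γ) = mpow S t) {t : ℕ} (ht : T ≤ t) (m : ℕ) :
    mpow S (t + m * γ) = mpow S t := by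
  induction m with
  | zero => simp
  | succ m ih => rw [Nat.succ_mul, ← add_assoc, hT _ (by omega), ih]

lemma one_le_mpow_diag_of_periodic {S : Fin n → Fin n → ℝ≥0} {γ T l c : ℕ} {i : Fin n}
    (hT : ∀ t ≥ T, mpow S (t + γ) = mpow S t) (hl : T ≤ l * γ) (hc : 0 < c)
    (hi : 1 ≤ mpow S c i i) : 1 ≤ mpow S (l * γ) i i := by
  obtain ⟨c, rfl⟩ : ∃ c', c = c' + 1 := ⟨c - 1, by omega⟩
  calc 1 ≤ mpow S (c + 1) i i ^ (l * γ) := one_le_pow₀ hi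
    _ ≤ mpow S ((c + 1) * (l * γ)) i i := mpow_diag_pow_le S _ _ i
    _ = mpow S (l * γ) i i := by
        rw [show (c + 1) * (l * γ) = l * γ + c * l * γ by ring, mpow_add_mul_of_periodic hT hl]

end Periodicity

section Restriction

variable {n : ℕ}

noncomputable def restrictRows (p : Fin n → Prop) (B : Fin n → Fin n → ℝ≥0) :
    Fin n → Fin n → ℝ≥0 :=
  fun i j => if p i then B i j else 0

noncomputable def restrictCols (p : Fin n → Prop) (B : Fin n → Fin n → ℝ≥0) :
    Fin n → Fin n → ℝ≥0 :=
  fun i j => if p j then B i j else 0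

lemma mpow_eq_zero_of_support {S : Fin n → Fin n → ℝ≥0} {p : Fin n → Prop}
    (hS : ∀ i j, S i j ≠ 0 → p i ∧ p j) {i j : Fin n} (h : ¬ (p i ↔ p j)) (N : ℕ) :
    mpow S N i j = 0 := by
  cases N with
  | zero =>
    refine if_neg ?_
    rintro rfl
    exact h Iff.rfl
  | succ N =>
    refine le_antisymm ?_ zero_le
    by_cases hi : p i
    · rw [mpow_succ']
      refine mmul_le_iff.2 fun k => ?_
      rw [not_imp_comm.1 (fun h => (hS k j h).2) (fun hj => h (iff_of_true hi hj)), mul_zero]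
    · refine mmul_le_iff.2 fun k => ?_
      rw [not_imp_comm.1 (fun h => (hS i k h).1) hi, zero_mul]

variable {p : Fin n → Prop} {P B : Fin n → Fin n → ℝ≥0}

lemma mmul_restrictRows (hzero : ∀ i k, ¬ p i → p k → P i k = 0) (hdiag : ∀ i, p i → 1 ≤ P i i)
    (hle : ∀ i k j, P i k * B k j ≤ B i j) : mmul P (restrictRows p B) = restrictRows p B := by
  funext i j
  refine le_antisymm (mmul_le_iff.2 fun k => ?_) ?_
  · by_cases hk : p k
    · by_cases hi : p i
      · simpa [restrictRows, hk, hi] using hle i k j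
      · simp [restrictRows, hi, hzero i k hi hk]
    · simp [restrictRows, hk]
  · by_cases hi : p i
    · calc restrictRows p B i j = 1 * restrictRows p B i j := (one_mul _).symm
        _ ≤ P i i * restrictRows p B i j := mul_le_mul_left (hdiag i hi) _
        _ ≤ mmul P (restrictRows p B) i j := mul_le_mmul _ _ i i j
    · simp [restrictRows, hi]

lemma mmul_restrictCols (hzero : ∀ k j, p k → ¬ p j → P k j = 0) (hdiag : ∀ j, p j → 1 ≤ P j j)
    (hle : ∀ i k j, B i k * P k j ≤ B i j) : mmul (restrictCols p B) P = restrictCols p B := by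
  have h := mmul_restrictRows (P := fun i j => P j i) (B := fun i j => B j i)
    (fun i k hi hk => hzero k i hk hi) hdiag fun i k j => by rw [mul_comm]; exact hle j k i
  funext i j
  simpa [mmul, restrictRows, restrictCols, mul_comm] using congrFun (congrFun h j) i

end Restriction

/-- with the CSR data for `A` (`λ(A) = 1`), if `{S^t}` is
periodic for `t ≥ T`, then `S^(lγ) ⊗ R = R` and `C ⊗ S^(lγ) = C` for every
multiple `lγ ≥ T`. -/
theorem csr_SR_CS_fixed {n : ℕ} (A : Fin n → Fin n → ℝ≥0) (h1 : mcgm A = 1)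
    (G : CritSubgraph A) (T : ℕ)
    (hT : ∀ t ≥ T, mpow (Smat A G) (t + graphCyc G.E) = mpow (Smat A G) t) :
    ∀ l : ℕ, T ≤ l * graphCyc G.E →
      mmul (mpow (Smat A G) (l * graphCyc G.E)) (Rmat A G) = Rmat A G ∧
      mmul (Cmat A G) (mpow (Smat A G) (l * graphCyc G.E)) = Cmat A G := by
  intro l hl
  set γ := graphCyc G.E
  set P := mpow (Smat A G) (l * γ)
  obtain ⟨C, hC⟩ := exists_mpow_le_of_mpow_diag_le_one (mpow_diag_le_one h1.le)
  have hCγ : ∀ m i j, mpow (mpow A γ) m i j ≤ C := fun m i j => by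
    rw [← mpow_mul]; exact hC _ i j
  have hPA : ∀ i k, P i k ≤ mpow (mpow A γ) l i k := fun i k => by
    rw [← mpow_mul, mul_comm]; exact mpow_mono G.Smat_le _ i k
  have hzero : ∀ i k, ¬ (G.Nc i ↔ G.Nc k) → P i k = 0 := fun i k h =>
    mpow_eq_zero_of_support (fun _ _ h => G.Nc_of_Smat_ne_zero h) h _
  have hdiag : ∀ i, G.Nc i → 1 ≤ P i i := fun i hi => by
    obtain ⟨c, hc, hci⟩ := G.exists_one_le_mpow_Smat_diag h1 hi
    exact one_le_mpow_diag_of_periodic hT hl hc hci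
  exact ⟨mmul_restrictRows (fun i k hi hk => hzero i k fun h => hi (h.2 hk)) hdiag
      fun i k j => (mul_le_mul_left (hPA i k) _).trans (mpow_mul_kleeneStar_le hCγ l i k j),
    mmul_restrictCols (fun k j hk hj => hzero k j fun h => hj (h.1 hk)) hdiag
      fun i k j => (mul_le_mul_right (hPA k j) _).trans (kleeneStar_mul_mpow_le hCγ l i k j)⟩

end MaxAlg
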